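/- Let G be a critical graph with chromatic number k+1 for an integer k ≥ 3, and let F ⊆ E(G) be a separating edge set of G with |F| ≤ k. Then |F| = k and there is an edge cut (X, Y, F) of G such that: (a) every coloring f ∈ 𝒞𝒪_k(G[X]) satisfies |f(X_F)| = 1 and every coloring f ∈ 𝒞𝒪_k(G[Y]) satisfies |f(Y_F)| = k; (b) the graph G₁ obtained from G[X ∪ Y_F] by adding all edges between vertices of Y_F (so that Y_F becomes a clique) is critical with chromatic number k+1; (c) the graph G₂ obtained from G[Y] by adding a new vertex joined to all vertices of Y_F is critical with chromatic number k+1. -/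

import Mathlib

open SimpleGraph

/-- There exist `n` pairwise edge-disjoint `u`-`v` paths in `G`. -/
def HasEdgeDisjointPaths {V : Type} (G : SimpleGraph V) (u v : V) (n : ℕ) : Prop :=
  ∃ P : Fin n → G.Walk u v, (∀ i, (P i).IsPath) ∧
    ∀ i j, i ≠ j → ∀ e, e ∈ (P i).edges → e ∉ (P j).edges

/-- The local edge connectivity `λ_G(u,v)`: the maximum number of pairwise
edge-disjoint `u`-`v` paths in `G`. -/
noncomputable def localEdgeConn {V : Type} (G : SimpleGraph V) (u v : V) : ℕ :=
  sSup {n | HasEdgeDisjointPaths G u v n}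

/-- The maximum local edge connectivity `λ(G)` (equal to `0` if `G` has at most
one vertex). -/
noncomputable def maxLocalEdgeConn {V : Type} (G : SimpleGraph V) : ℕ :=
  sSup {n | ∃ u v : V, u ≠ v ∧ n = localEdgeConn G u v}

/-- There exist `n` internally vertex-disjoint `u`-`v` paths in `G`. -/
def HasInternallyDisjointPaths {V : Type} (G : SimpleGraph V) (u v : V) (n : ℕ) : Prop :=
  ∃ P : Fin n → G.Walk u v, (∀ i, (P i).IsPath) ∧
    ∀ i j, i ≠ j → ∀ x, x ∈ (P i).support → x ∈ (P j).support → x = u ∨ x = v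

/-- The local connectivity `κ_G(u,v)`. -/
noncomputable def localConn {V : Type} (G : SimpleGraph V) (u v : V) : ℕ :=
  sSup {n | HasInternallyDisjointPaths G u v n}

/-- The maximum local connectivity `κ(G)`. -/
noncomputable def maxLocalConn {V : Type} (G : SimpleGraph V) : ℕ :=
  sSup {n | ∃ u v : V, u ≠ v ∧ n = localConn G u v}

/-- A graph is critical if every proper subgraph has a smaller chromatic number. -/
def IsCritical {V : Type} (G : SimpleGraph V) : Prop :=
  ∀ H : G.Subgraph, H ≠ ⊤ → H.coe.chromaticNumber < G.chromaticNumber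

/-- The number of connected components of `G`. -/
noncomputable def numComponents {V : Type} (G : SimpleGraph V) : ℕ :=
  Nat.card G.ConnectedComponent

/-- `S` is a separating vertex set of `G`: deleting `S` increases the number of
connected components. -/
def IsSepVertexSet {V : Type} (G : SimpleGraph V) (S : Set V) : Prop :=
  numComponents G < numComponents (G.induce Sᶜ)

/-- `F` is a separating edge set of `G`. -/
def IsSepEdgeSet {V : Type} (G : SimpleGraph V) (F : Set (Sym2 V)) : Prop :=
  numComponents G < numComponents (G.deleteEdges F)

/-- `G` has no separating vertex (cut vertex). -/
def HasNoCutVertex {V : Type} (G : SimpleGraph V) : Prop :=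
  ∀ v : V, ¬ IsSepVertexSet G {v}

/-- `B` is a block of `G`: a maximal connected subgraph of `G` without a cut vertex. -/
def IsBlock {V : Type} (G : SimpleGraph V) (B : G.Subgraph) : Prop :=
  B.coe.Connected ∧ HasNoCutVertex B.coe ∧
    ∀ B' : G.Subgraph, B ≤ B' → B'.coe.Connected → HasNoCutVertex B'.coe → B' = B

/-- `G` is a complete graph of order `n`. -/
def IsCompleteOfOrder {V : Type} (G : SimpleGraph V) (n : ℕ) : Prop :=
  Nat.card V = n ∧ ∀ v w : V, v ≠ w → G.Adj v w

/-- The cycle on `ZMod n`. -/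
def cycleGraphZ (n : ℕ) : SimpleGraph (ZMod n) :=
  SimpleGraph.fromRel (fun a b => b = a + 1)

/-- `G` is an odd cycle. -/
def IsOddCycle {V : Type} (G : SimpleGraph V) : Prop :=
  ∃ n : ℕ, Odd n ∧ 3 ≤ n ∧ Nonempty (G ≃g cycleGraphZ n)

/-- The wheel: a cycle of length `n` together with a hub joined to all its vertices. -/
def wheelGraph (n : ℕ) : SimpleGraph (Option (ZMod n)) :=
  SimpleGraph.fromRel (fun a b =>
    (a = none ∧ b ≠ none) ∨ ∃ x y, a = some x ∧ b = some y ∧ (cycleGraphZ n).Adj x y)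

/-- `G` is an odd wheel. -/
def IsOddWheel {V : Type} (G : SimpleGraph V) : Prop :=
  ∃ n : ℕ, Odd n ∧ 3 ≤ n ∧ Nonempty (G ≃g wheelGraph n)

/-- The Hajós join of `G₁` (with edge `v₁w₁`) and `G₂` (with edge `v₂w₂`):
delete the two edges, identify `v₁` with `v₂`, and add the edge `w₁w₂`. -/
def hajosJoin {V₁ V₂ : Type} (G₁ : SimpleGraph V₁) (G₂ : SimpleGraph V₂)
    (v₁ w₁ : V₁) (v₂ w₂ : V₂) : SimpleGraph {x : V₁ ⊕ V₂ // x ≠ Sum.inr v₂} :=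
  SimpleGraph.fromRel (fun a b =>
    (∃ x y : V₁, a.1 = Sum.inl x ∧ b.1 = Sum.inl y ∧ G₁.Adj x y ∧
        ¬(x = v₁ ∧ y = w₁) ∧ ¬(x = w₁ ∧ y = v₁)) ∨
    (∃ x y : V₂, a.1 = Sum.inr x ∧ b.1 = Sum.inr y ∧ G₂.Adj x y) ∨
    (∃ y : V₂, a.1 = Sum.inl v₁ ∧ b.1 = Sum.inr y ∧ G₂.Adj v₂ y ∧ y ≠ w₂) ∨
    (a.1 = Sum.inl w₁ ∧ b.1 = Sum.inr w₂))

/-- `G` is (isomorphic to) a Hajós join of `G₁` and `G₂`. -/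
def IsHajosJoin {V V₁ V₂ : Type} (G : SimpleGraph V) (G₁ : SimpleGraph V₁)
    (G₂ : SimpleGraph V₂) : Prop :=
  ∃ (v₁ w₁ : V₁) (v₂ w₂ : V₂), G₁.Adj v₁ w₁ ∧ G₂.Adj v₂ w₂ ∧
    Nonempty (G ≃g hajosJoin G₁ G₂ v₁ w₁ v₂ w₂)

/-- The class `ℋ_k`: for `k ≠ 2, 3` it contains the complete graphs of order
`k+1`; `ℋ₂` consists of the odd cycles; `ℋ₃` contains the odd wheels; and for
`k ≥ 3` the class is closed under Hajós joins. -/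
inductive HajosClass : (k : ℕ) → {V : Type} → SimpleGraph V → Prop where
  | complete {k : ℕ} {V : Type} (G : SimpleGraph V) (h2 : k ≠ 2) (h3 : k ≠ 3)
      (h : IsCompleteOfOrder G (k + 1)) : HajosClass k G
  | oddCycle {V : Type} (G : SimpleGraph V) (h : IsOddCycle G) : HajosClass 2 G
  | oddWheel {V : Type} (G : SimpleGraph V) (h : IsOddWheel G) : HajosClass 3 G
  | join {k : ℕ} (hk : 3 ≤ k) {V V₁ V₂ : Type} (G : SimpleGraph V)
      (G₁ : SimpleGraph V₁) (G₂ : SimpleGraph V₂)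
      (h₁ : HajosClass k G₁) (h₂ : HajosClass k G₂) (h : IsHajosJoin G G₁ G₂) :
      HajosClass k G

/-- The class `𝒞_k`: critical graphs with chromatic number `k+1` and maximum
local edge connectivity at most `k`. -/
def InCk {V : Type} (G : SimpleGraph V) (k : ℕ) : Prop :=
  IsCritical G ∧ G.chromaticNumber = (k + 1 : ℕ) ∧ maxLocalEdgeConn G ≤ k

/-- Minimum degree (0 for the empty graph). -/
noncomputable def minDeg {V : Type} [Fintype V] (G : SimpleGraph V) : ℕ :=
  letI := Classical.decEq V
  letI : DecidableRel G.Adj := Classical.decRel _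
  G.minDegree

/-- Maximum degree (0 for the empty graph). -/
noncomputable def maxDeg {V : Type} [Fintype V] (G : SimpleGraph V) : ℕ :=
  letI := Classical.decEq V
  letI : DecidableRel G.Adj := Classical.decRel _
  G.maxDegree

/-- The minimum degree of a subgraph of `G`. -/
noncomputable def subgraphMinDeg {V : Type} [Fintype V] {G : SimpleGraph V}
    (H : G.Subgraph) : ℕ :=
  letI : Fintype H.verts := (Set.toFinite H.verts).fintype
  minDeg H.coe

/-- The coloring number `col(G) = 1 + max {δ(H) : H ⊆ G}`. -/
noncomputable def coloringNumber {V : Type} [Fintype V] (G : SimpleGraph V) : ℕ :=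
  1 + sSup (Set.range (subgraphMinDeg (G := G)))

/-- `∂_G(X)`: the set of edges of `G` with exactly one end in `X`. -/
def edgeBoundary {V : Type} (G : SimpleGraph V) (X : Set V) : Set (Sym2 V) :=
  {e | e ∈ G.edgeSet ∧ ∃ x y : V, e = s(x, y) ∧ x ∈ X ∧ y ∉ X}

/-- The vertices of `X` incident with some edge of `F`. -/
def cutVerts {V : Type} (F : Set (Sym2 V)) (X : Set V) : Set V :=
  {x ∈ X | ∃ e ∈ F, x ∈ e}

/-- The graph obtained from `G` by identifying the vertices `v` and `w`. -/
def identifyVerts {V : Type} (G : SimpleGraph V) (v w : V) :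
    SimpleGraph {x : V // x ≠ w} :=
  SimpleGraph.fromRel (fun a b =>
    G.Adj a.1 b.1 ∨ (a.1 = v ∧ G.Adj w b.1) ∨ (b.1 = v ∧ G.Adj w a.1))

/-- The graph obtained from `H` by adding a new vertex joined to all vertices of `T`. -/
def addVertexJoined {W : Type} (H : SimpleGraph W) (T : Set W) : SimpleGraph (Option W) :=
  SimpleGraph.fromRel (fun a b =>
    (∃ x y : W, a = some x ∧ b = some y ∧ H.Adj x y) ∨
    (a = none ∧ ∃ y ∈ T, b = some y))

/-- `G` is 3-connected: more than 3 vertices and connected after deleting any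
set of fewer than 3 vertices. -/
def IsThreeConnected {V : Type} (G : SimpleGraph V) : Prop :=
  3 < Nat.card V ∧ ∀ S : Set V, S.ncard < 3 → (G.induce Sᶜ).Connected

/-!
A component of `G - F` gives a cut `S` with `∂S ⊆ F`. Fix `k`-colourings `f` of `G[S]` and `g`
of `G[Sᶜ]`. The colour pairs `(g y, f x)` over the edges `xy` of `∂S` meet the graph of every
permutation `π` of the colours, since otherwise `f` and `π ∘ g` glue to a `k`-colouring of `G`.
By Hall's theorem a set of at most `k` such cells then contains a rectangle `s × t` with
`|s| + |t| > k`, which forces it to be a full row or a full column: one side is constant on its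
boundary vertices, the other uses all `k` colours on its own, and `∂S = F` has exactly `k`
edges. Testing against one fixed colouring shows that the constant side `X` is the same for all
pairs.

So `X` acts like a single vertex and `Xᶜ` like a `k`-clique on `Y_F`. Hence neither `G₁` nor
`G₂` is `k`-colourable, while for each of their edges a `k`-colouring of `G` minus a suitable
edge of `G`, after recolouring at most one vertex, colours the graph without that edge.
-/

namespace Finset

/-- One direction of the Frobenius–König theorem, via Hall's marriage theorem. -/
theorem exists_product_subset_of_forall_perm {α : Type*} [Fintype α] [DecidableEq α]
    {D : Finset (α × α)} (hD : ∀ π : Equiv.Perm α, ∃ p ∈ D, π p.1 = p.2) :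
    ∃ s t : Finset α, s ×ˢ t ⊆ D ∧ Fintype.card α < #s + #t := by
  by_contra! h
  set avoid : α → Finset α := fun a => {b | (a, b) ∉ D}
  have hall : ∀ s : Finset α, #s ≤ #(s.biUnion avoid) := by
    intro s
    have hsub : s ×ˢ (univ \ s.biUnion avoid) ⊆ D := by
      intro p hp
      simp only [mem_product, mem_sdiff, mem_univ, mem_biUnion, true_and, not_exists,
        not_and] at hp
      by_contra hpD
      exact hp.2 p.1 hp.1 (by simpa [avoid] using hpD)
    have := h _ _ hsub
    rw [card_univ_sdiff] at this
    have := card_le_univ (s.biUnion avoid)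
    omega
  obtain ⟨f, hf, hfD⟩ := (all_card_le_biUnion_card_iff_exists_injective avoid).mp hall
  obtain ⟨p, hp, hπ⟩ := hD (Equiv.ofBijective f hf.bijective_of_finite)
  have hpf : (p.1, f p.1) = p := Prod.ext rfl hπ
  exact (by simpa [avoid] using hfD p.1 : (p.1, f p.1) ∉ D) (hpf ▸ hp)

theorem eq_row_or_column_of_forall_perm {α : Type*} [Fintype α] [DecidableEq α]
    {D : Finset (α × α)} (hD : ∀ π : Equiv.Perm α, ∃ p ∈ D, π p.1 = p.2)
    (hcard : #D ≤ Fintype.card α) :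
    (∃ a, D = {a} ×ˢ univ) ∨ ∃ b, D = univ ×ˢ {b} := by
  obtain ⟨s, t, hst, hlt⟩ := exists_product_subset_of_forall_perm hD
  have hprod : #s * #t ≤ Fintype.card α := by
    simpa [card_product] using (card_le_card hst).trans hcard
  have hs := card_le_univ s
  have ht := card_le_univ t
  have hcases : #s = 1 ∧ t = univ ∨ s = univ ∧ #t = 1 := by
    rw [← card_eq_iff_eq_univ, ← card_eq_iff_eq_univ]
    rcases Nat.lt_or_ge #s 2 with h | h <;> rcases Nat.lt_or_ge #t 2 with h' | h'
    all_goals first | omega | nlinarith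
  have heq : ∀ {R : Finset (α × α)}, R ⊆ D → #D ≤ #R → D = R := fun hR h =>
    (eq_of_subset_of_card_le hR h).symm
  rcases hcases with ⟨hs1, rfl⟩ | ⟨rfl, ht1⟩
  · obtain ⟨a, rfl⟩ := card_eq_one.mp hs1
    exact .inl ⟨a, heq hst (by simpa using hcard)⟩
  · obtain ⟨b, rfl⟩ := card_eq_one.mp ht1
    exact .inr ⟨b, heq hst (by simpa using hcard)⟩

end Finset

lemma Sym2.mk_ne_mk_of_notMem {α : Type*} {S : Set α} {x y u v : α} (hx : x ∉ S) (hy : y ∉ S)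
    (hu : u ∈ S) : s(x, y) ≠ s(u, v) := by
  intro h
  have hmem := Sym2.mem_mk_left u v
  rw [← h] at hmem
  rcases Sym2.mem_iff.mp hmem with rfl | rfl <;> contradiction

lemma Function.Injective.sym2_mk_eq_mk_iff {α β : Type*} {f : α → β} (hf : f.Injective)
    {a b c d : α} : s(f a, f b) = s(f c, f d) ↔ s(a, b) = s(c, d) := by
  simp only [Sym2.eq_iff, hf.eq_iff]

section Critical
variable {V W : Type} {G : SimpleGraph V} {k : ℕ}

lemma IsCritical.colorable_of_ne_top (hcrit : IsCritical G)
    (hchi : G.chromaticNumber = (↑(k + 1) : ℕ∞)) {H : G.Subgraph} (hH : H ≠ ⊤) :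
    H.coe.Colorable k := by
  have := hchi ▸ hcrit H hH
  rw [Nat.cast_succ, ENat.lt_add_one_iff (ENat.natCast_ne_top k)] at this
  exact chromaticNumber_le_iff_colorable.mp this

lemma not_colorable_of_chromaticNumber_eq (hchi : G.chromaticNumber = (↑(k + 1) : ℕ∞)) :
    ¬ G.Colorable k := by
  rw [Nat.cast_succ] at hchi
  exact (chromaticNumber_eq_iff_colorable_not_colorable.mp hchi).2

lemma IsCritical.colorable_induce (hcrit : IsCritical G)
    (hchi : G.chromaticNumber = (↑(k + 1) : ℕ∞)) {S : Set V} (hS : S ≠ Set.univ) :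
    (G.induce S).Colorable k := by
  have hne : (⊤ : G.Subgraph).induce S ≠ ⊤ := fun h =>
    hS (by simpa using congrArg Subgraph.verts h)
  rw [induce_eq_coe_induce_top]
  exact hcrit.colorable_of_ne_top hchi hne

lemma IsCritical.colorable_deleteEdges (hcrit : IsCritical G)
    (hchi : G.chromaticNumber = (↑(k + 1) : ℕ∞)) {u v : V} (huv : G.Adj u v) :
    (G.deleteEdges {s(u, v)}).Colorable k := by
  have hne : (⊤ : G.Subgraph).deleteEdges {s(u, v)} ≠ ⊤ := fun h => by
    simpa [huv] using congrArg (fun H : G.Subgraph => H.Adj u v) h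
  exact (hcrit.colorable_of_ne_top hchi hne).of_hom
    ⟨fun v => ⟨v, trivial⟩, fun h => Subgraph.deleteEdges_adj .. |>.mpr ((deleteEdges_adj ..).mp h)⟩

lemma IsCritical.exists_adj (hcrit : IsCritical G)
    (hchi : G.chromaticNumber = (↑(k + 1) : ℕ∞)) (hk : k ≠ 0) (v : V) : ∃ u, G.Adj v u := by
  classical
  by_contra! hv
  have hS : ({v}ᶜ : Set V) ≠ Set.univ := by simp
  obtain ⟨f⟩ := hcrit.colorable_induce hchi hS
  have : G.Colorable k := ⟨Coloring.mk
    (fun w => if hw : w = v then ⟨0, Nat.pos_of_ne_zero hk⟩ else f ⟨w, hw⟩) fun {a b} hab => by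
      have ha : a ≠ v := fun h => hv b (h ▸ hab)
      have hb : b ≠ v := fun h => hv a (h ▸ hab.symm)
      simpa [ha, hb] using f.valid (show (G.induce {v}ᶜ).Adj ⟨a, ha⟩ ⟨b, hb⟩ from hab)⟩
  exact not_colorable_of_chromaticNumber_eq hchi this

lemma colorable_succ_of_colorable_deleteEdges {K : SimpleGraph W} {a b : W}
    (h : (K.deleteEdges {s(a, b)}).Colorable k) : K.Colorable (k + 1) := by
  classical
  obtain ⟨c⟩ := h
  refine ⟨Coloring.mk (fun v => if v = a then Fin.last k else (c v).castSucc) fun {v w} hvw => ?_⟩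
  by_cases hv : v = a <;> by_cases hw : w = a <;> simp only [hv, hw, if_true, if_false]
  · exact absurd (hv.trans hw.symm) hvw.ne
  · exact (Fin.castSucc_lt_last _).ne'
  · exact (Fin.castSucc_lt_last _).ne
  · refine fun e => c.valid ((deleteEdges_adj ..).mpr ⟨hvw, ?_⟩) (Fin.castSucc_injective _ e)
    exact Sym2.mk_ne_mk_of_notMem (S := {a}) hv hw rfl

lemma isCritical_of_forall_colorable_deleteEdges {K : SimpleGraph W}
    (hK : ¬ K.Colorable k) (hadj : ∀ a, ∃ b, K.Adj a b)
    (hdel : ∀ a b, K.Adj a b → (K.deleteEdges {s(a, b)}).Colorable k) :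
    IsCritical K ∧ K.chromaticNumber = (↑(k + 1) : ℕ∞) := by
  have hchi : K.chromaticNumber = (↑(k + 1) : ℕ∞) := by
    rcases isEmpty_or_nonempty W with hW | ⟨⟨a⟩⟩
    · exact absurd (Colorable.of_isEmpty k) hK
    obtain ⟨b, hab⟩ := hadj a
    rw [Nat.cast_succ]
    exact chromaticNumber_eq_iff_colorable_not_colorable.mpr
      ⟨colorable_succ_of_colorable_deleteEdges (hdel a b hab), hK⟩
  refine ⟨fun H hH => ?_, hchi⟩
  obtain ⟨a, b, hab, hHab⟩ : ∃ a b, K.Adj a b ∧ ¬ H.Adj a b := by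
    by_contra! hall
    refine hH (Subgraph.ext (Set.eq_univ_of_forall fun a => ?_) ?_)
    · obtain ⟨b, hb⟩ := hadj a
      exact H.edge_vert (hall a b hb)
    · ext a b
      exact ⟨fun h => H.adj_sub h, hall a b⟩
  have hcol : H.coe.Colorable k := (hdel a b hab).of_hom ⟨fun v => v.1, fun {v w} h => by
    refine (deleteEdges_adj ..).mpr ⟨H.adj_sub h, ?_⟩
    intro hvw
    rcases Sym2.eq_iff.mp hvw with ⟨rfl, rfl⟩ | ⟨rfl, rfl⟩
    exacts [hHab h, hHab h.symm]⟩
  rw [hchi, Nat.cast_succ, ENat.lt_add_one_iff (ENat.natCast_ne_top k)]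
  exact hcol.chromaticNumber_le
end Critical

section Cut
variable {V : Type} {G : SimpleGraph V} {F : Set (Sym2 V)} {S : Set V}

lemma edgeBoundary_compl : edgeBoundary G Sᶜ = edgeBoundary G S := by
  ext e
  simp only [edgeBoundary, Set.mem_ofPred_eq, Set.mem_compl_iff, not_not]
  constructor <;> rintro ⟨he, x, y, rfl, hx, hy⟩ <;> exact ⟨he, y, x, Sym2.eq_swap, hy, hx⟩

lemma mem_cutVerts_edgeBoundary {v : V} :
    v ∈ cutVerts (edgeBoundary G S) S ↔ v ∈ S ∧ ∃ w ∉ S, G.Adj v w := by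
  constructor
  · rintro ⟨hv, _, ⟨he, x, y, rfl, hx, hy⟩, hve⟩
    rcases Sym2.mem_iff.mp hve with rfl | rfl
    exacts [⟨hv, y, hy, he⟩, absurd hv hy]
  · rintro ⟨hv, w, hw, hvw⟩
    exact ⟨hv, s(v, w), ⟨hvw, v, w, rfl, hv, hw⟩, Sym2.mem_mk_left v w⟩

lemma mem_cutVerts_edgeBoundary_compl {v : V} :
    v ∈ cutVerts (edgeBoundary G S) Sᶜ ↔ v ∉ S ∧ ∃ u ∈ S, G.Adj u v := by
  rw [← edgeBoundary_compl, mem_cutVerts_edgeBoundary]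
  simp [adj_comm]

lemma IsSepEdgeSet.exists_edgeBoundary_subset [Finite V] (hF : IsSepEdgeSet G F) :
    ∃ S : Set V, S.Nonempty ∧ S ≠ Set.univ ∧ edgeBoundary G S ⊆ F := by
  obtain ⟨u, v, huv⟩ : ∃ u v, ¬ (G.deleteEdges F).Reachable u v := by
    by_contra! h
    have : Subsingleton (G.deleteEdges F).ConnectedComponent :=
      ⟨ConnectedComponent.ind₂ fun u v => ConnectedComponent.sound (h u v)⟩
    exact hF.not_ge <| Nat.card_le_card_of_injective
      (ConnectedComponent.map (Hom.ofLE (G.deleteEdges_le F)))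
      (Function.injective_of_subsingleton _)
  refine ⟨{w | (G.deleteEdges F).Reachable u w}, ⟨u, .rfl⟩,
    fun h => huv (h.symm ▸ Set.mem_univ v : v ∈ _), ?_⟩
  rintro _ ⟨hxy, x, y, rfl, hx, hy⟩
  by_contra hF
  exact hy (hx.trans (Adj.reachable ((deleteEdges_adj ..).mpr ⟨hxy, hF⟩)))

def crossingPairs (G : SimpleGraph V) (S : Set V) : Set (S × ↥Sᶜ) := {q | G.Adj q.1 q.2}

lemma ncard_crossingPairs_le [Finite V] :
    (crossingPairs G S).ncard ≤ (edgeBoundary G S).ncard := by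
  refine Set.ncard_le_ncard_of_injOn (fun q => s(q.1.1, q.2.1))
    (fun q hq => ⟨hq, q.1, q.2, rfl, q.1.2, q.2.2⟩) ?_
  rintro ⟨⟨x, hx⟩, ⟨y, hy⟩⟩ - ⟨⟨x', hx'⟩, ⟨y', hy'⟩⟩ - h
  rcases Sym2.eq_iff.mp h with ⟨rfl, rfl⟩ | ⟨rfl, rfl⟩
  exacts [rfl, absurd hx hy']

lemma ncard_cutVerts_compl_le [Finite V] :
    (cutVerts (edgeBoundary G S) Sᶜ).ncard ≤ (edgeBoundary G S).ncard := by
  have himage : cutVerts (edgeBoundary G S) Sᶜ = (fun q => q.2.1) '' crossingPairs G S := by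
    ext v
    rw [mem_cutVerts_edgeBoundary_compl]
    constructor
    · rintro ⟨hv, u, hu, huv⟩
      exact ⟨(⟨u, hu⟩, ⟨v, hv⟩), huv, rfl⟩
    · rintro ⟨q, hq, rfl⟩
      exact ⟨q.2.2, q.1, q.1.2, hq⟩
  rw [himage]
  exact (Set.ncard_image_le (Set.toFinite _)).trans ncard_crossingPairs_le

end Cut

section CrossColors
variable {V : Type} {β : Type*} {G : SimpleGraph V} {F : Set (Sym2 V)} {S : Set V}

def crossColorPairs (f : (G.induce S).Coloring β) (g : (G.induce Sᶜ).Coloring β) :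
    Set (β × β) :=
  (fun q => (g q.2, f q.1)) '' crossingPairs G S

lemma ncard_crossColorPairs_le [Finite V] [Finite β] (f : (G.induce S).Coloring β)
    (g : (G.induce Sᶜ).Coloring β) :
    (crossColorPairs f g).ncard ≤ (edgeBoundary G S).ncard :=
  (Set.ncard_image_le (Set.toFinite _)).trans ncard_crossingPairs_le

/-- Otherwise `f` on `S` and `π ∘ g` on `Sᶜ` would glue to a colouring of `G`. -/
lemma exists_mem_crossColorPairs_apply_eq (hG : IsEmpty (G.Coloring β))
    (f : (G.induce S).Coloring β) (g : (G.induce Sᶜ).Coloring β) (π : Equiv.Perm β) :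
    ∃ p ∈ crossColorPairs f g, π p.1 = p.2 := by
  classical
  by_contra! h
  refine hG.false (Coloring.mk (fun v => if hv : v ∈ S then f ⟨v, hv⟩ else π (g ⟨v, hv⟩)) ?_)
  intro u w huw
  by_cases hu : u ∈ S <;> by_cases hw : w ∈ S <;> simp only [hu, hw, dite_true, dite_false]
  · exact f.valid huw
  · exact fun e => h _ ⟨(⟨u, hu⟩, ⟨w, hw⟩), huw, rfl⟩ e.symm
  · exact h _ ⟨(⟨w, hw⟩, ⟨u, hu⟩), huw.symm, rfl⟩
  · exact fun e => g.valid (show (G.induce Sᶜ).Adj ⟨u, hu⟩ ⟨w, hw⟩ from huw) (π.injective e)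

lemma crossColorPairs_eq_row_or_column [Finite V] [Fintype β] [DecidableEq β]
    (hG : IsEmpty (G.Coloring β)) (hS : (edgeBoundary G S).ncard ≤ Fintype.card β)
    (f : (G.induce S).Coloring β) (g : (G.induce Sᶜ).Coloring β) :
    (∃ a, crossColorPairs f g = {a} ×ˢ Set.univ) ∨ ∃ b, crossColorPairs f g = Set.univ ×ˢ {b} := by
  classical
  have hcard : (crossColorPairs f g).toFinset.card ≤ Fintype.card β := by
    rw [← Set.ncard_eq_toFinset_card']
    exact (ncard_crossColorPairs_le f g).trans hS
  have hmeet (π : Equiv.Perm β) : ∃ p ∈ (crossColorPairs f g).toFinset, π p.1 = p.2 := by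
    simpa using exists_mem_crossColorPairs_apply_eq hG f g π
  rcases Finset.eq_row_or_column_of_forall_perm hmeet hcard with ⟨a, ha⟩ | ⟨b, hb⟩
  · exact .inl ⟨a, by rw [← Set.coe_toFinset (crossColorPairs f g), ha, Finset.coe_product,
      Finset.coe_singleton, Finset.coe_univ]⟩
  · exact .inr ⟨b, by rw [← Set.coe_toFinset (crossColorPairs f g), hb, Finset.coe_product,
      Finset.coe_singleton, Finset.coe_univ]⟩

lemma image_fst_crossColorPairs (f : (G.induce S).Coloring β) (g : (G.induce Sᶜ).Coloring β) :
    Prod.fst '' crossColorPairs f g = g '' {y : ↥Sᶜ | y.1 ∈ cutVerts (edgeBoundary G S) Sᶜ} := by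
  ext c
  constructor
  · rintro ⟨_, ⟨q, hq, rfl⟩, rfl⟩
    exact ⟨q.2, mem_cutVerts_edgeBoundary_compl.mpr ⟨q.2.2, q.1, q.1.2, hq⟩, rfl⟩
  · rintro ⟨y, hy, rfl⟩
    obtain ⟨-, x, hx, hxy⟩ := mem_cutVerts_edgeBoundary_compl.mp hy
    exact ⟨_, ⟨(⟨x, hx⟩, y), hxy, rfl⟩, rfl⟩

lemma image_snd_crossColorPairs (f : (G.induce S).Coloring β) (g : (G.induce Sᶜ).Coloring β) :
    Prod.snd '' crossColorPairs f g = f '' {x : ↥S | x.1 ∈ cutVerts (edgeBoundary G S) S} := by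
  ext c
  constructor
  · rintro ⟨_, ⟨q, hq, rfl⟩, rfl⟩
    exact ⟨q.1, mem_cutVerts_edgeBoundary.mpr ⟨q.1.2, q.2, q.2.2, hq⟩, rfl⟩
  · rintro ⟨x, hx, rfl⟩
    obtain ⟨-, y, hy, hxy⟩ := mem_cutVerts_edgeBoundary.mp hx
    exact ⟨_, ⟨(x, ⟨y, hy⟩), hxy, rfl⟩, rfl⟩

lemma eq_edgeBoundary_of_edgeBoundary_subset [Finite V] [Fintype β] [DecidableEq β]
    (hG : IsEmpty (G.Coloring β)) (hsub : edgeBoundary G S ⊆ F)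
    (hFβ : F.ncard ≤ Fintype.card β) (f : (G.induce S).Coloring β)
    (g : (G.induce Sᶜ).Coloring β) :
    F = edgeBoundary G S ∧ F.ncard = Fintype.card β := by
  have hS := (Set.ncard_le_ncard hsub).trans hFβ
  have hD : (crossColorPairs f g).ncard = Fintype.card β := by
    rcases crossColorPairs_eq_row_or_column hG hS f g with ⟨a, h⟩ | ⟨b, h⟩ <;>
      simp [h, Set.ncard_prod]
  have heq := Set.eq_of_subset_of_ncard_le hsub
    (hFβ.trans (hD ▸ ncard_crossColorPairs_le f g))
  exact ⟨heq.symm, le_antisymm hFβ (heq ▸ hD ▸ ncard_crossColorPairs_le f g)⟩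

lemma image_eq_singleton_and_univ_or [Finite V] [Fintype β] [DecidableEq β] [Nonempty β]
    (hG : IsEmpty (G.Coloring β)) (hF : F = edgeBoundary G S) (hFβ : F.ncard ≤ Fintype.card β)
    (f : (G.induce S).Coloring β) (g : (G.induce Sᶜ).Coloring β) :
    (∃ a, g '' {y : ↥Sᶜ | y.1 ∈ cutVerts F Sᶜ} = {a} ∧
      f '' {x : ↥S | x.1 ∈ cutVerts F S} = Set.univ) ∨
    (∃ b, f '' {x : ↥S | x.1 ∈ cutVerts F S} = {b} ∧
      g '' {y : ↥Sᶜ | y.1 ∈ cutVerts F Sᶜ} = Set.univ) := by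
  subst hF
  rw [← image_fst_crossColorPairs f g, ← image_snd_crossColorPairs f g]
  rcases crossColorPairs_eq_row_or_column hG hFβ f g with ⟨a, h⟩ | ⟨b, h⟩ <;> rw [h]
  · exact .inl ⟨a, Set.fst_image_prod _ Set.univ_nonempty,
      Set.snd_image_prod (Set.singleton_nonempty a) _⟩
  · exact .inr ⟨b, Set.snd_image_prod Set.univ_nonempty _,
      Set.fst_image_prod _ (Set.singleton_nonempty b)⟩

end CrossColors

lemma addVertexJoined_adj {W : Type} {H : SimpleGraph W} {T : Set W} {a b : Option W} :
    (addVertexJoined H T).Adj a b ↔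
      (∃ x y, a = some x ∧ b = some y ∧ H.Adj x y) ∨
      (a = none ∧ ∃ y ∈ T, b = some y) ∨ (b = none ∧ ∃ y ∈ T, a = some y) := by
  rw [addVertexJoined, fromRel_adj]
  constructor
  · rintro ⟨-, (⟨x, y, rfl, rfl, h⟩ | ⟨rfl, y, hy, rfl⟩) |
      (⟨x, y, rfl, rfl, h⟩ | ⟨rfl, y, hy, rfl⟩)⟩
    exacts [.inl ⟨x, y, rfl, rfl, h⟩, .inr (.inl ⟨rfl, y, hy, rfl⟩),
      .inl ⟨y, x, rfl, rfl, h.symm⟩, .inr (.inr ⟨rfl, y, hy, rfl⟩)]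
  · rintro (⟨x, y, rfl, rfl, h⟩ | ⟨rfl, y, hy, rfl⟩ | ⟨rfl, y, hy, rfl⟩)
    · exact ⟨fun e => h.ne (Option.some_injective _ e), .inl (.inl ⟨x, y, rfl, rfl, h⟩)⟩
    · exact ⟨(Option.some_ne_none y).symm, .inl (.inr ⟨rfl, y, hy, rfl⟩)⟩
    · exact ⟨Option.some_ne_none y, .inr (.inr ⟨rfl, y, hy, rfl⟩)⟩

lemma not_colorable_addVertexJoined {W : Type} {H : SimpleGraph W} {T : Set W} {k : ℕ}
    (hT : ∀ c : H.Coloring (Fin k), c '' T = Set.univ) : ¬ (addVertexJoined H T).Colorable k := by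
  rintro ⟨c⟩
  let c' : H.Coloring (Fin k) :=
    c.comp ⟨some, fun h => addVertexJoined_adj.mpr (.inl ⟨_, _, rfl, rfl, h⟩)⟩
  obtain ⟨y, hy, hcy⟩ := (hT c').symm ▸ Set.mem_univ (c none)
  exact c.valid (addVertexJoined_adj.mpr (.inr (.inl ⟨rfl, y, hy, rfl⟩))) hcy.symm

def SimpleGraph.induceWithClique {V : Type} (G : SimpleGraph V) (W Q : Set V) : SimpleGraph W :=
  G.induce W ⊔ SimpleGraph.fromRel (fun a b : W => a.1 ∈ Q ∧ b.1 ∈ Q)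

lemma SimpleGraph.induceWithClique_adj {V : Type} {G : SimpleGraph V} {W Q : Set V} {a b : W} :
    (G.induceWithClique W Q).Adj a b ↔ G.Adj a b ∨ a ≠ b ∧ a.1 ∈ Q ∧ b.1 ∈ Q := by
  simp only [induceWithClique, sup_adj, fromRel_adj, induce_adj, and_comm (a := b.1 ∈ Q), or_self]

section MonoRainbowCut
variable {V : Type} {G : SimpleGraph V} {k : ℕ} {F : Set (Sym2 V)} {X : Set V}

/-- The edge cut `(X, Xᶜ, F)` of the theorem together with its property (a). -/
structure IsMonoRainbowCut (G : SimpleGraph V) (k : ℕ) (F : Set (Sym2 V)) (X : Set V) :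
    Prop where
  nonempty : X.Nonempty
  ne_univ : X ≠ Set.univ
  eq_edgeBoundary : F = edgeBoundary G X
  ncard_eq : F.ncard = k
  mono : ∀ f : (G.induce X).Coloring (Fin k), ∃ a, f '' {x : ↥X | x.1 ∈ cutVerts F X} = {a}
  rainbow : ∀ g : (G.induce Xᶜ).Coloring (Fin k),
    g '' {y : ↥Xᶜ | y.1 ∈ cutVerts F Xᶜ} = Set.univ

lemma isMonoRainbowCut_of_mono [Finite V] (hk : 2 ≤ k) (hcrit : IsCritical G)
    (hchi : G.chromaticNumber = (↑(k + 1) : ℕ∞)) (hXne : X.Nonempty) (hXu : X ≠ Set.univ)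
    (hF : F = edgeBoundary G X) (hFk : F.ncard = k) (f₀ : (G.induce X).Coloring (Fin k))
    (hf₀ : ∃ b, f₀ '' {x : ↥X | x.1 ∈ cutVerts F X} = {b}) :
    IsMonoRainbowCut G k F X := by
  have : NeZero k := ⟨by omega⟩
  have hG : IsEmpty (G.Coloring (Fin k)) :=
    not_nonempty_iff.mp (not_colorable_of_chromaticNumber_eq hchi)
  have hsplit := image_eq_singleton_and_univ_or hG hF (by simp [hFk])
  have hne (a : Fin k) : ({a} : Set (Fin k)) ≠ Set.univ := fun h => by
    have := congrArg Set.ncard h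
    rw [Set.ncard_singleton, Set.ncard_univ, Nat.card_fin] at this
    omega
  obtain ⟨g₀⟩ := hcrit.colorable_induce hchi (Set.compl_ne_univ.mpr hXne)
  have hrainbow (g : (G.induce Xᶜ).Coloring (Fin k)) :
      g '' {y : ↥Xᶜ | y.1 ∈ cutVerts F Xᶜ} = Set.univ := by
    obtain ⟨b, hb⟩ := hf₀
    rcases hsplit f₀ g with ⟨-, -, hf⟩ | ⟨-, -, hg⟩
    exacts [absurd (hb.symm.trans hf) (hne b), hg]
  refine ⟨hXne, hXu, hF, hFk, fun f => ?_, hrainbow⟩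
  rcases hsplit f g₀ with ⟨a, hg, -⟩ | ⟨b, hf, -⟩
  exacts [absurd (hg.symm.trans (hrainbow g₀)) (hne a), ⟨b, hf⟩]

theorem exists_isMonoRainbowCut [Finite V] (hk : 2 ≤ k) (hcrit : IsCritical G)
    (hchi : G.chromaticNumber = (↑(k + 1) : ℕ∞)) (hF : IsSepEdgeSet G F) (hFk : F.ncard ≤ k) :
    ∃ X, IsMonoRainbowCut G k F X := by
  obtain ⟨S, hSne, hSu, hsub⟩ := hF.exists_edgeBoundary_subset
  have hG : IsEmpty (G.Coloring (Fin k)) :=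
    not_nonempty_iff.mp (not_colorable_of_chromaticNumber_eq hchi)
  obtain ⟨f₀⟩ := hcrit.colorable_induce hchi hSu
  obtain ⟨g₀⟩ := hcrit.colorable_induce hchi (Set.compl_ne_univ.mpr hSne)
  obtain ⟨hFS, hFcard⟩ :=
    eq_edgeBoundary_of_edgeBoundary_subset hG hsub (by simpa using hFk) f₀ g₀
  rw [Fintype.card_fin] at hFcard
  have : NeZero k := ⟨by omega⟩
  rcases image_eq_singleton_and_univ_or hG hFS (by simp [hFcard]) f₀ g₀ with
    ⟨a, hg₀, -⟩ | ⟨b, hf₀, -⟩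
  · exact ⟨Sᶜ, isMonoRainbowCut_of_mono hk hcrit hchi (Set.nonempty_compl.mpr hSu)
      (Set.compl_ne_univ.mpr hSne) (hFS.trans edgeBoundary_compl.symm) hFcard g₀ ⟨a, hg₀⟩⟩
  · exact ⟨S, isMonoRainbowCut_of_mono hk hcrit hchi hSne hSu hFS hFcard f₀ ⟨b, hf₀⟩⟩

namespace IsMonoRainbowCut

lemma mem_cutVerts (hX : IsMonoRainbowCut G k F X) {v : V} :
    v ∈ cutVerts F X ↔ v ∈ X ∧ ∃ w ∉ X, G.Adj v w := by
  rw [hX.eq_edgeBoundary, mem_cutVerts_edgeBoundary]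

lemma mem_cutVerts_compl (hX : IsMonoRainbowCut G k F X) {v : V} :
    v ∈ cutVerts F Xᶜ ↔ v ∉ X ∧ ∃ u ∈ X, G.Adj u v := by
  rw [hX.eq_edgeBoundary, mem_cutVerts_edgeBoundary_compl]

lemma exists_eq_of_forall_ne (hX : IsMonoRainbowCut G k F X) (h : V → Fin k)
    (hh : ∀ x y, x ∈ X → y ∈ X → G.Adj x y → h x ≠ h y) :
    ∃ a, ∀ x ∈ cutVerts F X, h x = a := by
  obtain ⟨a, ha⟩ := hX.mono (Coloring.mk (fun x => h x) fun {x y} hxy => hh x y x.2 y.2 hxy)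
  refine ⟨a, fun x hx => ?_⟩
  have : h x ∈ (fun x : ↥X => h x) '' {x : ↥X | x.1 ∈ cutVerts F X} := ⟨⟨x, hx.1⟩, hx, rfl⟩
  rwa [← Set.mem_singleton_iff, ← ha]

lemma ncard_cutVerts_compl [Finite V] (hX : IsMonoRainbowCut G k F X) (hcrit : IsCritical G)
    (hchi : G.chromaticNumber = (↑(k + 1) : ℕ∞)) : (cutVerts F Xᶜ).ncard = k := by
  refine le_antisymm ?_ ?_
  · calc (cutVerts F Xᶜ).ncard ≤ F.ncard := by
          rw [hX.eq_edgeBoundary]; exact ncard_cutVerts_compl_le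
      _ = k := hX.ncard_eq
  · obtain ⟨g⟩ := hcrit.colorable_induce hchi (Set.compl_ne_univ.mpr hX.nonempty)
    calc k = (g '' {y : ↥Xᶜ | y.1 ∈ cutVerts F Xᶜ}).ncard := by
          rw [hX.rainbow g, Set.ncard_univ, Nat.card_fin]
      _ ≤ {y : ↥Xᶜ | y.1 ∈ cutVerts F Xᶜ}.ncard := Set.ncard_image_le (Set.toFinite _)
      _ ≤ (cutVerts F Xᶜ).ncard :=
          Set.ncard_le_ncard_of_injOn Subtype.val (fun _ hy => hy) Subtype.val_injective.injOn

lemma injOn_of_forall_ne [Finite V] (hX : IsMonoRainbowCut G k F X) (hcrit : IsCritical G)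
    (hchi : G.chromaticNumber = (↑(k + 1) : ℕ∞)) (h : V → Fin k)
    (hh : ∀ x y, x ∉ X → y ∉ X → G.Adj x y → h x ≠ h y) : Set.InjOn h (cutVerts F Xᶜ) := by
  have himage : h '' cutVerts F Xᶜ = Set.univ := by
    refine Set.eq_univ_of_forall fun c => ?_
    have hc := (hX.rainbow (Coloring.mk (fun y => h y) fun {x y} hxy => hh x y x.2 y.2 hxy)).symm
      ▸ Set.mem_univ c
    obtain ⟨y, hy, rfl⟩ := hc
    exact ⟨y, hy, rfl⟩
  refine Set.injOn_of_ncard_image_eq ?_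
  rw [himage, hX.ncard_cutVerts_compl hcrit hchi, Set.ncard_univ, Nat.card_fin]

lemma exists_adj_addVertexJoined [Finite V] (hX : IsMonoRainbowCut G k F X) (hk : k ≠ 0)
    (hcrit : IsCritical G) (hchi : G.chromaticNumber = (↑(k + 1) : ℕ∞)) (a : Option ↥Xᶜ) :
    ∃ b, (addVertexJoined (G.induce Xᶜ) {y : ↥Xᶜ | y.1 ∈ cutVerts F Xᶜ}).Adj a b := by
  cases a with
  | none =>
    obtain ⟨y, hy⟩ := Set.nonempty_of_ncard_ne_zero (hX.ncard_cutVerts_compl hcrit hchi ▸ hk)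
    exact ⟨some ⟨y, hy.1⟩, addVertexJoined_adj.mpr (.inr (.inl ⟨rfl, _, hy, rfl⟩))⟩
  | some y =>
    obtain ⟨u, hyu⟩ := hcrit.exists_adj hchi hk y
    by_cases hu : u ∈ X
    · have hy : y.1 ∈ cutVerts F Xᶜ := hX.mem_cutVerts_compl.mpr ⟨y.2, u, hu, hyu.symm⟩
      exact ⟨none, addVertexJoined_adj.mpr (.inr (.inr ⟨rfl, y, hy, rfl⟩))⟩
    · exact ⟨some ⟨u, hu⟩, addVertexJoined_adj.mpr (.inl ⟨y, _, rfl, rfl, hyu⟩)⟩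

/-- The new vertex takes the colour that a `k`-colouring of `G - uv` has on all of `X_F`. -/
lemma colorable_addVertexJoined_deleteEdges_of (hX : IsMonoRainbowCut G k F X)
    {e : Sym2 (Option ↥Xᶜ)} {u v : V} (h : (G.deleteEdges {s(u, v)}).Coloring (Fin k))
    (hv : v ∉ X) (hY : ∀ y y' : ↥Xᶜ, s(some y, some y') ≠ e → s(y.1, y'.1) ≠ s(u, v))
    (hT : ∀ y : ↥Xᶜ, y.1 ∈ cutVerts F Xᶜ → s(none, some y) ≠ e →
      ∃ x ∈ X, G.Adj x y ∧ s(x, y.1) ≠ s(u, v)) :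
    ((addVertexJoined (G.induce Xᶜ) {y : ↥Xᶜ | y.1 ∈ cutVerts F Xᶜ}).deleteEdges {e}).Colorable
      k := by
  obtain ⟨c, hc⟩ := hX.exists_eq_of_forall_ne h fun x y hx hy hxy =>
    h.valid ((deleteEdges_adj ..).mpr ⟨hxy, (Sym2.mk_ne_mk_of_notMem (S := Xᶜ)
      (not_not.mpr hx) (not_not.mpr hy) hv).trans_eq Sym2.eq_swap⟩)
  have hTc (y : ↥Xᶜ) (hy : y.1 ∈ cutVerts F Xᶜ) (hye : s(none, some y) ≠ e) : h y ≠ c := by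
    obtain ⟨x, hx, hxy, hne⟩ := hT y hy hye
    rw [← hc x (hX.mem_cutVerts.mpr ⟨hx, y, y.2, hxy⟩)]
    exact (h.valid ((deleteEdges_adj ..).mpr ⟨hxy, hne⟩)).symm
  refine ⟨Coloring.mk (fun o => o.elim c fun y => h y) fun {a b} hab => ?_⟩
  obtain ⟨hab, hne⟩ := (deleteEdges_adj ..).mp hab
  rcases addVertexJoined_adj.mp hab with ⟨y, y', rfl, rfl, hyy⟩ | ⟨rfl, y, hy, rfl⟩ |
    ⟨rfl, y, hy, rfl⟩
  · exact h.valid ((deleteEdges_adj ..).mpr ⟨hyy, hY y y' hne⟩)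
  · exact (hTc y hy hne).symm
  · exact hTc y hy (Sym2.eq_swap.trans_ne hne)

lemma colorable_addVertexJoined_deleteEdges [Finite V] (hX : IsMonoRainbowCut G k F X)
    (hcrit : IsCritical G) (hchi : G.chromaticNumber = (↑(k + 1) : ℕ∞)) {a b : Option ↥Xᶜ}
    (hab : (addVertexJoined (G.induce Xᶜ) {y : ↥Xᶜ | y.1 ∈ cutVerts F Xᶜ}).Adj a b) :
    ((addVertexJoined (G.induce Xᶜ) {y : ↥Xᶜ | y.1 ∈ cutVerts F Xᶜ}).deleteEdges
      {s(a, b)}).Colorable k := by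
  have hnone (y : ↥Xᶜ) (hy : y.1 ∈ cutVerts F Xᶜ) :
      ((addVertexJoined (G.induce Xᶜ) {y : ↥Xᶜ | y.1 ∈ cutVerts F Xᶜ}).deleteEdges
        {s(none, some y)}).Colorable k := by
    obtain ⟨-, x₀, hx₀, hx₀y⟩ := hX.mem_cutVerts_compl.mp hy
    obtain ⟨h⟩ := hcrit.colorable_deleteEdges hchi hx₀y
    refine hX.colorable_addVertexJoined_deleteEdges_of h y.2
      (fun z z' _ => Sym2.mk_ne_mk_of_notMem z.2 z'.2 hx₀) fun z hz hzy => ?_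
    obtain ⟨-, x, hx, hxz⟩ := hX.mem_cutVerts_compl.mp hz
    refine ⟨x, hx, hxz, fun heq => hzy ?_⟩
    rcases Sym2.eq_iff.mp heq with ⟨-, h'⟩ | ⟨-, h'⟩
    exacts [by rw [Subtype.ext h'], absurd (h' ▸ hx₀) z.2]
  rcases addVertexJoined_adj.mp hab with ⟨y, y', rfl, rfl, hyy⟩ | ⟨rfl, y, hy, rfl⟩ |
    ⟨rfl, y, hy, rfl⟩
  · obtain ⟨h⟩ := hcrit.colorable_deleteEdges hchi hyy
    refine hX.colorable_addVertexJoined_deleteEdges_of h y'.2 (fun z z' hne heq => hne ?_)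
      fun z hz _ => ?_
    · rw [(Option.some_injective _).sym2_mk_eq_mk_iff, ← Subtype.val_injective.sym2_mk_eq_mk_iff]
      exact heq
    · obtain ⟨-, x, hx, hxz⟩ := hX.mem_cutVerts_compl.mp hz
      exact ⟨x, hx, hxz, (Sym2.mk_ne_mk_of_notMem y.2 y'.2 hx).symm⟩
  · exact hnone y hy
  · rw [Sym2.eq_swap]
    exact hnone y hy

theorem isCritical_addVertexJoined [Finite V] (hX : IsMonoRainbowCut G k F X) (hk : k ≠ 0)
    (hcrit : IsCritical G) (hchi : G.chromaticNumber = (↑(k + 1) : ℕ∞)) :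
    IsCritical (addVertexJoined (G.induce Xᶜ) {y : ↥Xᶜ | y.1 ∈ cutVerts F Xᶜ}) ∧
      (addVertexJoined (G.induce Xᶜ) {y : ↥Xᶜ | y.1 ∈ cutVerts F Xᶜ}).chromaticNumber =
        (↑(k + 1) : ℕ∞) :=
  isCritical_of_forall_colorable_deleteEdges (not_colorable_addVertexJoined hX.rainbow)
    (hX.exists_adj_addVertexJoined hk hcrit hchi)
    fun _ _ hab => hX.colorable_addVertexJoined_deleteEdges hcrit hchi hab

lemma not_colorable_induceWithClique [Finite V] (hX : IsMonoRainbowCut G k F X) (hk : k ≠ 0)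
    (hcrit : IsCritical G) (hchi : G.chromaticNumber = (↑(k + 1) : ℕ∞)) :
    ¬ (G.induceWithClique (X ∪ cutVerts F Xᶜ) (cutVerts F Xᶜ)).Colorable k := by
  rintro ⟨c⟩
  obtain ⟨a, ha⟩ :=
    hX.mono (c.comp ⟨fun x => ⟨x, .inl x.2⟩, fun h => induceWithClique_adj.mpr (.inl h)⟩)
  have hinj : Set.InjOn c {w | w.1 ∈ cutVerts F Xᶜ} := fun w hw w' hw' heq => by
    by_contra hne
    exact c.valid (induceWithClique_adj.mpr (.inr ⟨hne, hw, hw'⟩)) heq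
  have hmaps : Set.MapsTo c {w | w.1 ∈ cutVerts F Xᶜ} {a}ᶜ := by
    intro w hw hwa
    obtain ⟨hwX, x, hx, hxw⟩ := hX.mem_cutVerts_compl.mp hw
    have hxa : c ⟨x, .inl hx⟩ = a := by
      rw [← Set.mem_singleton_iff, ← ha]
      exact ⟨⟨x, hx⟩, hX.mem_cutVerts.mpr ⟨hx, w, hwX, hxw⟩, rfl⟩
    exact c.valid (induceWithClique_adj.mpr (.inl hxw)) (hxa.trans hwa.symm)
  have hcard : {w : ↥(X ∪ cutVerts F Xᶜ) | w.1 ∈ cutVerts F Xᶜ}.ncard = k := by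
    rw [← hX.ncard_cutVerts_compl hcrit hchi]
    exact Set.ncard_preimage_of_injective_subset_range Subtype.val_injective
      fun y hy => ⟨⟨y, .inr hy⟩, rfl⟩
  have := Set.ncard_le_ncard_of_injOn c hmaps hinj
  rw [hcard, Set.ncard_compl, Set.ncard_singleton, Nat.card_fin] at this
  omega

lemma exists_adj_induceWithClique (hX : IsMonoRainbowCut G k F X) (hk : k ≠ 0)
    (hcrit : IsCritical G) (hchi : G.chromaticNumber = (↑(k + 1) : ℕ∞))
    (a : ↥(X ∪ cutVerts F Xᶜ)) :
    ∃ b, (G.induceWithClique (X ∪ cutVerts F Xᶜ) (cutVerts F Xᶜ)).Adj a b := by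
  obtain ⟨v, hv | hv⟩ := a
  · obtain ⟨u, hvu⟩ := hcrit.exists_adj hchi hk v
    have hu : u ∈ X ∪ cutVerts F Xᶜ := by
      by_cases huX : u ∈ X
      exacts [.inl huX, .inr (hX.mem_cutVerts_compl.mpr ⟨huX, v, hv, hvu⟩)]
    exact ⟨⟨u, hu⟩, induceWithClique_adj.mpr (.inl hvu)⟩
  · obtain ⟨-, x, hx, hxv⟩ := hX.mem_cutVerts_compl.mp hv
    exact ⟨⟨x, .inl hx⟩, induceWithClique_adj.mpr (.inl hxv.symm)⟩

lemma colorable_induceWithClique_deleteEdges_of_adj [Finite V] (hX : IsMonoRainbowCut G k F X)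
    (hcrit : IsCritical G) (hchi : G.chromaticNumber = (↑(k + 1) : ℕ∞))
    {a b : ↥(X ∪ cutVerts F Xᶜ)} (hab : G.Adj a b) (hend : a.1 ∈ X ∨ b.1 ∈ X) :
    ((G.induceWithClique (X ∪ cutVerts F Xᶜ) (cutVerts F Xᶜ)).deleteEdges
      {s(a, b)}).Colorable k := by
  obtain ⟨h⟩ := hcrit.colorable_deleteEdges hchi hab
  have hinj := hX.injOn_of_forall_ne hcrit hchi h fun x y hx hy hxy =>
    h.valid ((deleteEdges_adj ..).mpr ⟨hxy, by
      rcases hend with ha | hb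
      exacts [Sym2.mk_ne_mk_of_notMem hx hy ha,
        (Sym2.mk_ne_mk_of_notMem hx hy hb).trans_eq Sym2.eq_swap]⟩)
  refine ⟨Coloring.mk (fun w => h w.1) fun {v w} hvw => ?_⟩
  obtain ⟨hvw, hne⟩ := (deleteEdges_adj ..).mp hvw
  rcases induceWithClique_adj.mp hvw with hG | ⟨hne', hv, hw⟩
  · exact h.valid
      ((deleteEdges_adj ..).mpr ⟨hG, Subtype.val_injective.sym2_mk_eq_mk_iff.not.mpr hne⟩)
  · exact fun heq => hne' (Subtype.ext (hinj hv hw heq))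

/-- For a clique edge `ww'`, colour `G - xw` (with `x ∈ X`) and give `w` the colour of `w'`. -/
lemma colorable_induceWithClique_deleteEdges_of_mem [Finite V] (hX : IsMonoRainbowCut G k F X)
    (hcrit : IsCritical G) (hchi : G.chromaticNumber = (↑(k + 1) : ℕ∞))
    {w w' : ↥(X ∪ cutVerts F Xᶜ)} (hw : w.1 ∈ cutVerts F Xᶜ) (hw' : w'.1 ∈ cutVerts F Xᶜ)
    (hww' : w ≠ w') :
    ((G.induceWithClique (X ∪ cutVerts F Xᶜ) (cutVerts F Xᶜ)).deleteEdges
      {s(w, w')}).Colorable k := by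
  classical
  obtain ⟨hwX, x, hx, hxw⟩ := hX.mem_cutVerts_compl.mp hw
  obtain ⟨h⟩ := hcrit.colorable_deleteEdges hchi hxw
  have hinj := hX.injOn_of_forall_ne hcrit hchi h fun y y' hy hy' hyy =>
    h.valid ((deleteEdges_adj ..).mpr ⟨hyy, Sym2.mk_ne_mk_of_notMem hy hy' hx⟩)
  obtain ⟨c, hc⟩ := hX.exists_eq_of_forall_ne h fun z z' hz hz' hzz =>
    h.valid ((deleteEdges_adj ..).mpr ⟨hzz, (Sym2.mk_ne_mk_of_notMem (S := Xᶜ)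
      (not_not.mpr hz) (not_not.mpr hz') hwX).trans_eq Sym2.eq_swap⟩)
  have hw'c (v : ↥(X ∪ cutVerts F Xᶜ))
      (hvw : (G.induceWithClique (X ∪ cutVerts F Xᶜ) (cutVerts F Xᶜ)).Adj w v)
      (hvw' : v ≠ w') : h w' ≠ h v := by
    by_cases hv : v.1 ∈ cutVerts F Xᶜ
    · exact fun heq => hvw' (Subtype.ext (hinj hw' hv heq)).symm
    obtain ⟨hw'X, x', hx', hx'w'⟩ := hX.mem_cutVerts_compl.mp hw'
    have hvX : v.1 ∈ X := v.2.resolve_right hv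
    have hwv : G.Adj w v := (induceWithClique_adj.mp hvw).resolve_right fun h' => hv h'.2.2
    rw [hc v (hX.mem_cutVerts.mpr ⟨hvX, w, hwX, hwv.symm⟩),
      ← hc x' (hX.mem_cutVerts.mpr ⟨hx', w', hw'X, hx'w'⟩)]
    refine (h.valid ((deleteEdges_adj ..).mpr ⟨hx'w', fun heq => ?_⟩)).symm
    rcases Sym2.eq_iff.mp heq with ⟨-, h'⟩ | ⟨-, h'⟩
    exacts [hww' (Subtype.ext h'.symm), absurd (h' ▸ hx) hw'X]
  refine ⟨Coloring.mk (fun v => if v = w then h w' else h v) fun {v v'} hvv' => ?_⟩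
  obtain ⟨hadj, hne⟩ := (deleteEdges_adj ..).mp hvv'
  by_cases hv : v = w <;> by_cases hv' : v' = w <;> simp only [hv, hv', if_true, if_false]
  · exact absurd (hv.trans hv'.symm) hadj.ne
  · subst hv
    exact hw'c v' hadj fun h' => hne (by rw [h']; rfl)
  · subst hv'
    exact (hw'c v hadj.symm fun h' => hne (by rw [h', Sym2.eq_swap]; rfl)).symm
  rcases induceWithClique_adj.mp hadj with hG | ⟨hne', hv1, hv2⟩
  · refine h.valid ((deleteEdges_adj ..).mpr ⟨hG, ?_⟩)
    exact (Sym2.mk_ne_mk_of_notMem (S := {w.1}) (fun h' => hv (Subtype.ext h'))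
      (fun h' => hv' (Subtype.ext h')) rfl).trans_eq Sym2.eq_swap
  · exact fun heq => hne' (Subtype.ext (hinj hv1 hv2 heq))

theorem isCritical_induceWithClique [Finite V] (hX : IsMonoRainbowCut G k F X) (hk : k ≠ 0)
    (hcrit : IsCritical G) (hchi : G.chromaticNumber = (↑(k + 1) : ℕ∞)) :
    IsCritical (G.induceWithClique (X ∪ cutVerts F Xᶜ) (cutVerts F Xᶜ)) ∧
      (G.induceWithClique (X ∪ cutVerts F Xᶜ) (cutVerts F Xᶜ)).chromaticNumber =
        (↑(k + 1) : ℕ∞) := by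
  refine isCritical_of_forall_colorable_deleteEdges
    (hX.not_colorable_induceWithClique hk hcrit hchi)
    (hX.exists_adj_induceWithClique hk hcrit hchi) fun a b hab => ?_
  by_cases hY : a.1 ∈ cutVerts F Xᶜ ∧ b.1 ∈ cutVerts F Xᶜ
  · exact hX.colorable_induceWithClique_deleteEdges_of_mem hcrit hchi hY.1 hY.2 hab.ne
  have hG : G.Adj a b := (induceWithClique_adj.mp hab).resolve_right fun h => hY h.2
  refine hX.colorable_induceWithClique_deleteEdges_of_adj hcrit hchi hG ?_
  rcases a.2 with ha | ha <;> rcases b.2 with hb | hb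
  exacts [.inl ha, .inl ha, .inr hb, absurd ⟨ha, hb⟩ hY]

end IsMonoRainbowCut

end MonoRainbowCut

/-- (Toft 1970) Decomposition of a critical graph with
chromatic number `k+1` (`k ≥ 3`) along a separating edge set of size at most `k`. -/
theorem toft_edge_cut {V : Type} [Fintype V] (G : SimpleGraph V) (k : ℕ) (hk : 3 ≤ k)
    (hcrit : IsCritical G) (hchi : G.chromaticNumber = (↑(k + 1) : ℕ∞))
    (F : Set (Sym2 V)) (hF : IsSepEdgeSet G F) (hFcard : F.ncard ≤ k) :
    F.ncard = k ∧
    ∃ X : Set V, X.Nonempty ∧ X ≠ Set.univ ∧ F = edgeBoundary G X ∧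
      (∀ f : (G.induce X).Coloring (Fin k),
        (⇑f '' {x : X | x.1 ∈ cutVerts F X}).ncard = 1) ∧
      (∀ f : (G.induce Xᶜ).Coloring (Fin k),
        (⇑f '' {y : ↥Xᶜ | y.1 ∈ cutVerts F Xᶜ}).ncard = k) ∧
      (IsCritical (G.induce (X ∪ cutVerts F Xᶜ) ⊔
          SimpleGraph.fromRel (fun a b : ↥(X ∪ cutVerts F Xᶜ) =>
            a.1 ∈ cutVerts F Xᶜ ∧ b.1 ∈ cutVerts F Xᶜ)) ∧
        (G.induce (X ∪ cutVerts F Xᶜ) ⊔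
          SimpleGraph.fromRel (fun a b : ↥(X ∪ cutVerts F Xᶜ) =>
            a.1 ∈ cutVerts F Xᶜ ∧ b.1 ∈ cutVerts F Xᶜ)).chromaticNumber =
          (↑(k + 1) : ℕ∞)) ∧
      (IsCritical (addVertexJoined (G.induce Xᶜ) {y : ↥Xᶜ | y.1 ∈ cutVerts F Xᶜ}) ∧
        (addVertexJoined (G.induce Xᶜ)
            {y : ↥Xᶜ | y.1 ∈ cutVerts F Xᶜ}).chromaticNumber = (↑(k + 1) : ℕ∞)) := by
  obtain ⟨X, hX⟩ := exists_isMonoRainbowCut (by omega) hcrit hchi hF hFcard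
  refine ⟨hX.ncard_eq, X, hX.nonempty, hX.ne_univ, hX.eq_edgeBoundary, fun f => ?_, fun g => ?_,
    hX.isCritical_induceWithClique (by omega) hcrit hchi,
    hX.isCritical_addVertexJoined (by omega) hcrit hchi⟩
  · obtain ⟨a, ha⟩ := hX.mono f
    rw [ha, Set.ncard_singleton]
  · rw [hX.rainbow g, Set.ncard_univ, Nat.card_fin]
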